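/- Let μ be the probability measure on 2^ω determined by: μ([σ0]) = μ([σ1]) = μ([σ])/2 for all strings σ of even length, and μ([σ0]) = μ([σ]), μ([σ1]) = 0 for all σ of odd length. Then for 0 ≤ γ < 1/2 the γ-energy I_γ(μ) is finite, and for γ = 1/2 it is infinite. -/

import Mathlib

open MeasureTheory
open scoped Classical

/-- The cylinder of infinite binary sequences extending the finite string `σ`. -/
def cyl (σ : List Bool) : Set (ℕ → Bool) :=
  {a | ∀ i, i < σ.length → a i = σ.getD i false}

/-- The standard ultrametric `υ(a,b) = 2^{-min{n : a(n) ≠ b(n)}}` on Cantor space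
(with `υ(a,a) = 0`), valued in `ℝ≥0∞`. -/
noncomputable def ups (a b : ℕ → Bool) : ENNReal :=
  if a = b then 0 else 2 ^ (-((sInf {n : ℕ | a n ≠ b n} : ℕ) : ℤ))

/-!
If `b ≠ a` first differs from `a` at coordinate `n`, then `υ(a,b)^{-γ} = 2^{nγ}`; since `μ` has
no atoms, the potential of `μ` at `a` is `∑ₙ 2^{nγ} μ(Sₙ(a))`, where `Sₙ(a)` is the shell of points
first differing from `a` at `n`. A cylinder of length `n` has mass at most `2^{-⌈n/2⌉}`, so the
potential is bounded uniformly in `a` by a geometric series of ratio `2^{γ - 1/2}`. Conversely,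
`μ`-almost every `a` vanishes at all odd coordinates; for such `a` the shell at level `2k` has mass
exactly `2^{-(k+1)}`, so at `γ = 1/2` each even shell contributes `1/2` and the potential is
infinite almost everywhere.
-/

open PiNat
open scoped ENNReal

def prefixList (x : ℕ → Bool) (n : ℕ) : List Bool := List.ofFn fun i : Fin n => x i

lemma prefixList_succ (x : ℕ → Bool) (n : ℕ) :
    prefixList x (n + 1) = prefixList x n ++ [x n] := by
  simp only [prefixList, List.ofFn_succ']
  simp [List.concat_eq_append]

lemma cyl_prefixList (x : ℕ → Bool) (n : ℕ) : cyl (prefixList x n) = cylinder x n := by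
  ext y
  simp +contextual [cyl, prefixList, mem_cylinder_iff, List.getD_eq_getElem?_getD]

lemma measurableSet_cylinder (x : ℕ → Bool) (n : ℕ) : MeasurableSet (cylinder x n) := by
  rw [cylinder_eq_pi]
  exact MeasurableSet.pi (Finset.range n).countable_toSet fun _ _ => measurableSet_singleton _

section Shell

variable {E : ℕ → Type*}

def shell (x : ∀ n, E n) (n : ℕ) : Set (∀ n, E n) := cylinder x n \ cylinder x (n + 1)

lemma mem_shell_iff {x y : ∀ n, E n} {n : ℕ} : y ∈ shell x n ↔ y ≠ x ∧ firstDiff y x = n := by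
  by_cases h : y = x
  · simp [shell, h]
  · simp only [shell, Set.mem_sdiff, mem_cylinder_iff_le_firstDiff h, ne_eq, h,
      not_false_eq_true, true_and]
    omega

end Shell

lemma ups_eq_of_ne {x y : ℕ → Bool} (h : x ≠ y) : ups x y = 2 ^ (-(firstDiff x y : ℤ)) := by
  have hmem : firstDiff x y ∈ {n | x n ≠ y n} := apply_firstDiff_ne h
  have hInf : sInf {n | x n ≠ y n} = firstDiff x y :=
    (Nat.sInf_le hmem).antisymm <| not_lt.1 fun hlt =>
      Nat.sInf_mem ⟨_, hmem⟩ (apply_eq_of_lt_firstDiff hlt)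
  simp [ups, h, hInf]

lemma ups_rpow_neg_of_ne {x y : ℕ → Bool} (h : x ≠ y) (γ : ℝ) :
    ups x y ^ (-γ) = 2 ^ ((firstDiff x y : ℝ) * γ) := by
  rw [ups_eq_of_ne h, ← ENNReal.rpow_intCast, ← ENNReal.rpow_mul]
  push_cast
  ring_nf

lemma ups_rpow_neg_eq_tsum {x y : ℕ → Bool} (h : y ≠ x) (γ : ℝ) :
    ups x y ^ (-γ) = ∑' n : ℕ, (shell x n).indicator (fun _ => 2 ^ ((n : ℝ) * γ)) y := by
  rw [tsum_eq_single (firstDiff y x) fun n hn => Set.indicator_of_notMem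
      (fun hy => hn (mem_shell_iff.1 hy).2.symm) _,
    Set.indicator_of_mem (mem_shell_iff.2 ⟨h, rfl⟩), firstDiff_comm,
    ups_rpow_neg_of_ne (Ne.symm h)]

lemma lintegral_ups_rpow_neg (μ : Measure (ℕ → Bool)) [NullSingletonClass μ]
    (x : ℕ → Bool) (γ : ℝ) :
    ∫⁻ y, ups x y ^ (-γ) ∂μ = ∑' n : ℕ, 2 ^ ((n : ℝ) * γ) * μ (shell x n) := by
  have hshell (n : ℕ) : MeasurableSet (shell x n) :=
    (measurableSet_cylinder x n).diff (measurableSet_cylinder x (n + 1))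
  calc ∫⁻ y, ups x y ^ (-γ) ∂μ
      = ∫⁻ y, ∑' n : ℕ, (shell x n).indicator (fun _ => 2 ^ ((n : ℝ) * γ)) y ∂μ :=
        lintegral_congr_ae <| (Measure.ae_ne μ x).mono fun y hy => ups_rpow_neg_eq_tsum hy γ
    _ = ∑' n : ℕ, 2 ^ ((n : ℝ) * γ) * μ (shell x n) := by
        rw [lintegral_tsum fun n => (measurable_const.indicator (hshell n)).aemeasurable]
        simp_rw [lintegral_indicator_const (hshell _)]

def HalvesAtEvenLevels (μ : Measure (ℕ → Bool)) : Prop :=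
  ∀ σ : List Bool, Even σ.length →
    μ (cyl (σ ++ [false])) = μ (cyl σ) / 2 ∧ μ (cyl (σ ++ [true])) = μ (cyl σ) / 2

def ZeroChildAtOddLevels (μ : Measure (ℕ → Bool)) : Prop :=
  ∀ σ : List Bool, Odd σ.length → μ (cyl (σ ++ [false])) = μ (cyl σ) ∧ μ (cyl (σ ++ [true])) = 0

section SplitMeasure

variable {μ : Measure (ℕ → Bool)}

lemma measure_cylinder_succ_of_even (heven : HalvesAtEvenLevels μ) {n : ℕ} (hn : Even n)
    (x : ℕ → Bool) : μ (cylinder x (n + 1)) = μ (cylinder x n) / 2 := by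
  have h := heven (prefixList x n) (by simpa [prefixList] using hn)
  rw [← cyl_prefixList, ← cyl_prefixList, prefixList_succ]
  cases x n
  exacts [h.1, h.2]

lemma measure_cylinder_succ_of_odd (hodd : ZeroChildAtOddLevels μ) {n : ℕ} (hn : Odd n)
    {x : ℕ → Bool} (hx : x n = false) : μ (cylinder x (n + 1)) = μ (cylinder x n) := by
  rw [← cyl_prefixList, ← cyl_prefixList, prefixList_succ, hx]
  exact (hodd _ (by simpa [prefixList] using hn)).1

lemma measure_cylinder_le [IsProbabilityMeasure μ] (heven : HalvesAtEvenLevels μ)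
    (x : ℕ → Bool) (n : ℕ) : μ (cylinder x n) ≤ 2⁻¹ ^ ((n + 1) / 2) := by
  induction n with
  | zero => simp
  | succ n ih =>
    rcases Nat.even_or_odd n with hn | hn
    · obtain ⟨k, rfl⟩ := hn
      rw [measure_cylinder_succ_of_even heven ⟨k, rfl⟩, show (k + k + 1 + 1) / 2 = k + 1 by omega,
        pow_succ, ENNReal.div_eq_inv_mul, mul_comm]
      gcongr
      simpa [show (k + k + 1) / 2 = k by omega] using ih
    · obtain ⟨k, rfl⟩ := hn
      calc μ (cylinder x (2 * k + 1 + 1)) ≤ μ (cylinder x (2 * k + 1)) :=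
            measure_mono (cylinder_anti x (Nat.le_succ _))
        _ ≤ 2⁻¹ ^ ((2 * k + 1 + 1) / 2) := ih
        _ = 2⁻¹ ^ ((2 * k + 1 + 1 + 1) / 2) := by congr 1; omega

lemma nullSingletonClass_of_halvesAtEvenLevels [IsProbabilityMeasure μ]
    (heven : HalvesAtEvenLevels μ) : NullSingletonClass μ := by
  refine ⟨fun x => le_antisymm (ge_of_tendsto' (ENNReal.tendsto_pow_atTop_nhds_zero_of_lt_one
    (by norm_num : (2⁻¹ : ℝ≥0∞) < 1)) fun k => ?_) zero_le⟩
  calc μ {x} ≤ μ (cylinder x (2 * k)) :=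
        measure_mono (Set.singleton_subset_iff.2 (self_mem_cylinder x _))
    _ ≤ 2⁻¹ ^ ((2 * k + 1) / 2) := measure_cylinder_le heven x _
    _ = 2⁻¹ ^ k := by congr 1; omega

lemma measure_shell_of_even [IsFiniteMeasure μ] (heven : HalvesAtEvenLevels μ) {n : ℕ}
    (hn : Even n) (x : ℕ → Bool) : μ (shell x n) = μ (cylinder x n) / 2 := by
  rw [shell, measure_sdiff (cylinder_anti x (Nat.le_succ n))
      (measurableSet_cylinder x _).nullMeasurableSet (measure_ne_top _ _),
    measure_cylinder_succ_of_even heven hn, ENNReal.sub_half (measure_ne_top _ _)]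

lemma ae_odd_eq_false (hodd : ZeroChildAtOddLevels μ) : ∀ᵐ x ∂μ, ∀ i, Odd i → x i = false := by
  have hnull : μ (⋃ (σ : List Bool) (_ : Odd σ.length), cyl (σ ++ [true])) = 0 :=
    measure_iUnion_null fun σ => measure_iUnion_null fun hσ => (hodd σ hσ).2
  refine measure_mono_null (fun x hx => ?_) hnull
  obtain ⟨i, hi, hxi⟩ : ∃ i, Odd i ∧ x i = true := by simpa using hx
  refine Set.mem_iUnion₂.2 ⟨prefixList x i, by simpa [prefixList] using hi, ?_⟩
  rw [← hxi, ← prefixList_succ, cyl_prefixList]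
  exact self_mem_cylinder x _

lemma measure_cylinder_two_mul [IsProbabilityMeasure μ] (heven : HalvesAtEvenLevels μ)
    (hodd : ZeroChildAtOddLevels μ) {x : ℕ → Bool} (hx : ∀ i, Odd i → x i = false) (k : ℕ) :
    μ (cylinder x (2 * k)) = 2⁻¹ ^ k := by
  induction k with
  | zero => simp
  | succ k ih =>
    rw [show 2 * (k + 1) = 2 * k + 1 + 1 by ring,
      measure_cylinder_succ_of_odd hodd (odd_two_mul_add_one k) (hx _ (odd_two_mul_add_one k)),
      measure_cylinder_succ_of_even heven (even_two_mul k), ih, pow_succ, div_eq_mul_inv]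

end SplitMeasure

lemma tsum_rpow_mul_inv_two_pow_lt_top {γ : ℝ} (hγ : γ < 1 / 2) :
    ∑' n : ℕ, (2 : ℝ≥0∞) ^ ((n : ℝ) * γ) * 2⁻¹ ^ ((n + 1) / 2) < ⊤ := by
  have hterm (n : ℕ) :
      (2 : ℝ≥0∞) ^ ((n : ℝ) * γ) * 2⁻¹ ^ ((n + 1) / 2) ≤ (2 ^ (γ - 1 / 2)) ^ n := by
    have hhalf : (n : ℝ) / 2 ≤ ((n + 1) / 2 : ℕ) := by
      have : n ≤ 2 * ((n + 1) / 2) := by omega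
      rw [div_le_iff₀ two_pos]
      exact_mod_cast this.trans_eq (mul_comm _ _)
    rw [← ENNReal.rpow_natCast 2⁻¹, ENNReal.inv_rpow, ← ENNReal.rpow_neg,
      ← ENNReal.rpow_add _ _ two_ne_zero ENNReal.ofNat_ne_top, ← ENNReal.rpow_natCast,
      ← ENNReal.rpow_mul]
    exact ENNReal.rpow_le_rpow_of_exponent_le one_le_two (by nlinarith)
  calc ∑' n : ℕ, (2 : ℝ≥0∞) ^ ((n : ℝ) * γ) * 2⁻¹ ^ ((n + 1) / 2)
      ≤ ∑' n : ℕ, ((2 : ℝ≥0∞) ^ (γ - 1 / 2)) ^ n := ENNReal.tsum_le_tsum hterm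
    _ < ⊤ := tsum_geometric_lt_top.2
        (ENNReal.rpow_lt_one_of_one_lt_of_neg (by norm_num) (by linarith))

lemma tsum_rpow_half_mul_measure_shell_eq_top {μ : Measure (ℕ → Bool)} [IsProbabilityMeasure μ]
    (heven : HalvesAtEvenLevels μ) (hodd : ZeroChildAtOddLevels μ) {x : ℕ → Bool}
    (hx : ∀ i, Odd i → x i = false) :
    ∑' n : ℕ, (2 : ℝ≥0∞) ^ ((n : ℝ) * (1 / 2)) * μ (shell x n) = ⊤ := by
  have hterm (k : ℕ) :
      (2 : ℝ≥0∞) ^ (((2 * k : ℕ) : ℝ) * (1 / 2)) * μ (shell x (2 * k)) = 2⁻¹ := by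
    rw [measure_shell_of_even heven (even_two_mul k), measure_cylinder_two_mul heven hodd hx,
      show ((2 * k : ℕ) : ℝ) * (1 / 2) = k by push_cast; ring, ENNReal.rpow_natCast,
      ← mul_div_assoc, ← mul_pow, ENNReal.mul_inv_cancel two_ne_zero ENNReal.ofNat_ne_top,
      one_pow, one_div]
  refine top_le_iff.1 ?_
  calc ⊤ = ∑' _ : ℕ, (2⁻¹ : ℝ≥0∞) := (ENNReal.tsum_const_eq_top_of_ne_zero (by norm_num)).symm
    _ = ∑' k : ℕ, (2 : ℝ≥0∞) ^ (((2 * k : ℕ) : ℝ) * (1 / 2)) * μ (shell x (2 * k)) :=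
        tsum_congr fun k => (hterm k).symm
    _ ≤ ∑' n : ℕ, (2 : ℝ≥0∞) ^ ((n : ℝ) * (1 / 2)) * μ (shell x n) :=
        ENNReal.tsum_comp_le_tsum_of_injective (mul_right_injective₀ two_ne_zero)
          fun n : ℕ => (2 : ℝ≥0∞) ^ ((n : ℝ) * (1 / 2)) * μ (shell x n)

/-- For the measure on `2^ω` that splits mass evenly at even levels and sends all mass to
the `0`-child at odd levels, the `γ`-energy is finite for `0 ≤ γ < 1/2` and infinite at
`γ = 1/2`. -/
theorem stmt7 (μ : Measure (ℕ → Bool)) [IsProbabilityMeasure μ]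
    (heven : ∀ σ : List Bool, Even σ.length →
      μ (cyl (σ ++ [false])) = μ (cyl σ) / 2 ∧ μ (cyl (σ ++ [true])) = μ (cyl σ) / 2)
    (hodd : ∀ σ : List Bool, Odd σ.length →
      μ (cyl (σ ++ [false])) = μ (cyl σ) ∧ μ (cyl (σ ++ [true])) = 0) :
    (∀ γ : ℝ, 0 ≤ γ → γ < 1/2 → ∫⁻ a, ∫⁻ b, ups a b ^ (-γ) ∂μ ∂μ < ⊤) ∧
      ∫⁻ a, ∫⁻ b, ups a b ^ (-(1/2 : ℝ)) ∂μ ∂μ = ⊤ := by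
  have := nullSingletonClass_of_halvesAtEvenLevels heven
  refine ⟨fun γ _ hγ => ?_, ?_⟩
  · calc ∫⁻ a, ∫⁻ b, ups a b ^ (-γ) ∂μ ∂μ
        ≤ ∫⁻ _, ∑' n : ℕ, (2 : ℝ≥0∞) ^ ((n : ℝ) * γ) * 2⁻¹ ^ ((n + 1) / 2) ∂μ :=
          lintegral_mono fun a => by
            rw [lintegral_ups_rpow_neg]
            gcongr with n
            exact (measure_mono Set.sdiff_subset).trans (measure_cylinder_le heven a n)
      _ < ⊤ := by
          rw [lintegral_const, measure_univ, mul_one]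
          exact tsum_rpow_mul_inv_two_pow_lt_top hγ
  · have hinner : ∀ᵐ a ∂μ, ∫⁻ b, ups a b ^ (-(1/2 : ℝ)) ∂μ = ⊤ :=
      (ae_odd_eq_false hodd).mono fun a ha => by
        rw [lintegral_ups_rpow_neg]
        exact tsum_rpow_half_mul_measure_shell_eq_top heven hodd ha
    rw [lintegral_congr_ae hinner, lintegral_const, measure_univ, mul_one]
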